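/- Let c > 0, L, S ∈ ℝ³ with L ≠ S, t > 0 with t·c > dist L S, and let d be a unit vector in ℝ³ with inner product ⟪d, S - L⟫ > -‖S - L‖ (i.e., the ray from L with direction d is not pointing directly away so as to never close the ellipse). Then there exists a unique s > 0 such that the point P = L + s·d satisfies dist L P + dist P S = t·c. -/

import Mathlib

/-!
Write `v = S - L` and `p = ⟪d, v⟫`. For `s ≥ 0` the point `L + s • d` lies at distance `s` from `L`,
so it is on the ellipsoid iff `‖s • d - v‖ = T - s`. Squaring, the quadratic terms `s²` cancel and
this becomes the linear condition `2 (T - p) s = T² - ‖v‖²` together with `s ≤ T`. Since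
`p ≤ ‖v‖ < T` the coefficient is positive, so there is exactly one solution; it is positive because
`T > ‖v‖`, and it is at most `T` because `T² - 2pT + ‖v‖² ≥ (T - ‖v‖)²`.
-/

open RealInnerProductSpace

section Ellipsoid

variable {E : Type*} [NormedAddCommGroup E] [InnerProductSpace ℝ E] {d : E}

theorem dist_self_add_smul_of_norm_eq_one (hd : ‖d‖ = 1) (L : E) {s : ℝ} (hs : 0 ≤ s) :
    dist L (L + s • d) = s := by
  rw [dist_self_add_right, norm_smul, hd, mul_one, Real.norm_of_nonneg hs]

theorem norm_smul_sub_sq_of_norm_eq_one (hd : ‖d‖ = 1) (s : ℝ) (v : E) :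
    ‖s • d - v‖ ^ 2 = s ^ 2 - 2 * s * ⟪d, v⟫ + ‖v‖ ^ 2 := by
  rw [norm_sub_sq_real, real_inner_smul_left, norm_smul, hd, Real.norm_eq_abs, mul_one, sq_abs]
  ring

theorem dist_add_dist_eq_iff_of_norm_eq_one (hd : ‖d‖ = 1) (L S : E) (T : ℝ) {s : ℝ}
    (hs : 0 ≤ s) :
    dist L (L + s • d) + dist (L + s • d) S = T ↔
      s ≤ T ∧ 2 * (T - ⟪d, S - L⟫) * s = T ^ 2 - ‖S - L‖ ^ 2 := by
  have hsq := norm_smul_sub_sq_of_norm_eq_one hd s (S - L)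
  rw [dist_self_add_smul_of_norm_eq_one hd L hs, dist_eq_norm,
    show L + s • d - S = s • d - (S - L) by abel]
  constructor
  · intro h
    have hnorm : ‖s • d - (S - L)‖ = T - s := by linarith
    refine ⟨by linarith [norm_nonneg (s • d - (S - L))], ?_⟩
    rw [hnorm] at hsq
    linear_combination -hsq
  · rintro ⟨hsT, hlin⟩
    have hnorm : ‖s • d - (S - L)‖ = T - s :=
      (sq_eq_sq₀ (norm_nonneg _) (sub_nonneg.mpr hsT)).mp (by linear_combination hsq + hlin)
    linarith

theorem existsUnique_pos_dist_add_dist_eq (hd : ‖d‖ = 1) {L S : E} {T : ℝ}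
    (hT : dist L S < T) :
    ∃! s : ℝ, 0 < s ∧ dist L (L + s • d) + dist (L + s • d) S = T := by
  set a := ‖S - L‖
  set p := ⟪d, S - L⟫
  have haT : a < T := by rwa [dist_comm, dist_eq_norm] at hT
  have ha : 0 ≤ a := norm_nonneg _
  have hpa : p ≤ a := by simpa [hd] using real_inner_le_norm d (S - L)
  have hTp : 0 < 2 * (T - p) := by linarith
  set s₀ := (T ^ 2 - a ^ 2) / (2 * (T - p))
  have hs₀ : 2 * (T - p) * s₀ = T ^ 2 - a ^ 2 := mul_div_cancel₀ _ hTp.ne'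
  have hs₀pos : 0 < s₀ := div_pos (by nlinarith) hTp
  have hs₀T : s₀ ≤ T := by
    rw [div_le_iff₀ hTp]
    nlinarith [sq_nonneg (T - a)]
  refine ⟨s₀, ⟨hs₀pos, (dist_add_dist_eq_iff_of_norm_eq_one hd L S T hs₀pos.le).mpr
    ⟨hs₀T, hs₀⟩⟩, ?_⟩
  rintro s ⟨hs, hsum⟩
  obtain ⟨-, hlin⟩ := (dist_add_dist_eq_iff_of_norm_eq_one hd L S T hs.le).mp hsum
  exact mul_left_cancel₀ hTp.ne' (hlin.trans hs₀.symm)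

end Ellipsoid

theorem stmt_1_general (c : ℝ) (L S : EuclideanSpace ℝ (Fin 3))
    (t : ℝ) (htc : dist L S < t * c)
    (d : EuclideanSpace ℝ (Fin 3)) (hd : ‖d‖ = 1) :
    ∃! s : ℝ, 0 < s ∧ dist L (L + s • d) + dist (L + s • d) S = t * c :=
  existsUnique_pos_dist_add_dist_eq hd htc

theorem stmt_1 (c : ℝ) (hc : 0 < c) (L S : EuclideanSpace ℝ (Fin 3)) (hLS : L ≠ S)
    (t : ℝ) (ht : 0 < t) (htc : dist L S < t * c)
    (d : EuclideanSpace ℝ (Fin 3)) (hd : ‖d‖ = 1)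
    (hdir : inner ℝ d (S - L) > -‖S - L‖) :
    ∃! s : ℝ, 0 < s ∧ dist L (L + s • d) + dist (L + s • d) S = t * c :=
  stmt_1_general c L S t htc d hd
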